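/- Let (X,d,μ) be a space of homogeneous type, let δ ∈ (0,1) with δ ≤ (2A₀)^{-10} be fixed, and let γ ∈ (0,∞). Then there exists a constant C > 0 such that for every locally integrable function u : X → ℝ, every k ∈ ℤ, and every x ∈ X, one has ∫_X D_γ(x,y;δ^k)·|u(y) − u_{B(x,δ^k)}| dμ(y) ≤ C·Σ_{i=0}^{∞} δ^{iγ}·⨍_{B(x,δ^{k−i})} |u(y) − u_{B(x,δ^{k−i})}| dμ(y) (both sides being interpreted in [0,∞]). -/

import Mathlib

/-!
Write `B i = B(x, δ^(k-i))`; these balls increase to `X`, and doubling gives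
`μ(B (i+1)) ≤ K μ(B i)` with `K = Cμ^N`, `2^N > δ⁻¹`. Split `X` into the annuli
`B 0, B 1 \ B 0, B 2 \ B 1, …`. On the `i`-th annulus the kernel `D_γ(x,·;δ^k)` is at most
`K δ^((i-1)γ) μ(B i)⁻¹`. On `B i`, `|u - u_{B 0}| ≤ |u - u_{B i}| + |u_{B i} - u_{B 0}|`, and
telescoping with `|u_{B j} - u_{B (j+1)}| ≤ ⨍_{B j} |u - u_{B (j+1)}| ≤ K ⨍_{B (j+1)} |u - u_{B (j+1)}|`
bounds the second term by `K ∑_{j ≤ i} a_j`, where `a_j` is the mean oscillation of `u` on `B j`.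
What remains is the double series `∑_i θ^i ∑_{j ≤ i} a_j = (1 - θ)⁻¹ ∑_j θ^j a_j`, `θ = δ^γ < 1`.
-/

open MeasureTheory ENNReal

noncomputable section

namespace SHT

variable {X : Type*}

/-- The quasi-metric ball `B(x,r) := {y : d(x,y) < r}`. -/
def ball (d : X → X → ℝ) (x : X) (r : ℝ) : Set X := {y | d x y < r}

/-- `(X, d, μ)` is a space of homogeneous type with quasi-triangle constant `A₀`
and doubling constant `Cμ`. -/
structure IsSHT [MeasurableSpace X] (d : X → X → ℝ) (μ : Measure X) (A₀ Cμ : ℝ) : Prop where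
  one_le_A : 1 ≤ A₀
  nonneg : ∀ x y, 0 ≤ d x y
  eq_zero_iff : ∀ x y, d x y = 0 ↔ x = y
  symm : ∀ x y, d x y = d y x
  triangle : ∀ x y z, d x z ≤ A₀ * (d x y + d y z)
  measurable_ball : ∀ x r, MeasurableSet (ball d x r)
  one_le_C : 1 ≤ Cμ
  ball_pos : ∀ x, ∀ r : ℝ, 0 < r → 0 < μ (ball d x r)
  ball_lt_top : ∀ x, ∀ r : ℝ, 0 < r → μ (ball d x r) < ⊤
  doubling : ∀ x, ∀ r : ℝ, 0 < r →
    μ (ball d x (2 * r)) ≤ ENNReal.ofReal Cμ * μ (ball d x r)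

/-- The decay factor
`D_γ(x,y;r) := [μ(B(x,r)) + μ(B(x,d(x,y)))]⁻¹ (r/(r+d(x,y)))^γ`, in `[0,∞]`. -/
def Dgamma [MeasurableSpace X] (d : X → X → ℝ) (μ : Measure X) (γ : ℝ)
    (x y : X) (r : ℝ) : ℝ≥0∞ :=
  (μ (ball d x r) + μ (ball d x (d x y)))⁻¹ *
    ENNReal.ofReal ((r / (r + d x y)) ^ γ)

end SHT

theorem ENNReal.tsum_pow_mul_sum_range (θ : ℝ≥0∞) (a : ℕ → ℝ≥0∞) :
    ∑' n, θ ^ n * ∑ j ∈ Finset.range (n + 1), a j = (1 - θ)⁻¹ * ∑' j, θ ^ j * a j := by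
  rw [mul_comm, ← ENNReal.tsum_geometric, ← ENNReal.tsum_mul_right]
  simp_rw [← ENNReal.tsum_mul_left]
  rw [← ENNReal.tsum_prod, ← Finset.HasAntidiagonal.sigmaAntidiagonalEquivProd.tsum_eq,
    ENNReal.tsum_sigma']
  refine tsum_congr fun n => ?_
  simp only [Finset.HasAntidiagonal.sigmaAntidiagonalEquivProd_apply]
  rw [Finset.tsum_subtype (Finset.HasAntidiagonal.antidiagonal n)
    (fun p : ℕ × ℕ => θ ^ p.1 * a p.1 * θ ^ p.2),
    Finset.Nat.sum_antidiagonal_eq_sum_range_succ_mk, Finset.mul_sum]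
  refine Finset.sum_congr rfl fun j hj => ?_
  rw [mul_right_comm, ← pow_add, Nat.add_sub_cancel' (Finset.mem_range_succ_iff.mp hj)]

namespace MeasureTheory

variable {α : Type*} [MeasurableSpace α] {μ : Measure α} {s t : Set α} {u : α → ℝ}

def meanOscillation (μ : Measure α) (u : α → ℝ) (s : Set α) : ℝ≥0∞ :=
  (μ s)⁻¹ * ∫⁻ y in s, ENNReal.ofReal |u y - ⨍ z in s, u z ∂μ| ∂μ

theorem setAverage_sub_const (hs₀ : μ s ≠ 0) (hs : μ s ≠ ∞) (hu : IntegrableOn u s μ) (c : ℝ) :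
    ⨍ z in s, (u z - c) ∂μ = (⨍ z in s, u z ∂μ) - c := by
  have hμ : μ.real s ≠ 0 := ENNReal.toReal_ne_zero.mpr ⟨hs₀, hs⟩
  rw [setAverage_eq, setAverage_eq, integral_sub hu (integrableOn_const hs), setIntegral_const,
    smul_eq_mul, smul_eq_mul, smul_eq_mul]
  field_simp

theorem ofReal_abs_setAverage_sub_le (hs₀ : μ s ≠ 0) (hs : μ s ≠ ∞) (hu : IntegrableOn u s μ)
    (c : ℝ) :
    ENNReal.ofReal |(⨍ z in s, u z ∂μ) - c| ≤ (μ s)⁻¹ * ∫⁻ y in s, ENNReal.ofReal |u y - c| ∂μ := by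
  have hsub : IntegrableOn (fun z => u z - c) s μ := hu.sub (integrableOn_const hs)
  calc ENNReal.ofReal |(⨍ z in s, u z ∂μ) - c|
      = ENNReal.ofReal |⨍ z in s, (u z - c) ∂μ| := by rw [setAverage_sub_const hs₀ hs hu]
    _ ≤ ENNReal.ofReal (⨍ z in s, |u z - c| ∂μ) := by
        gcongr
        rw [setAverage_eq, setAverage_eq, smul_eq_mul, smul_eq_mul, abs_mul, abs_of_nonneg
          (by positivity)]
        gcongr
        exact abs_integral_le_integral_abs
    _ = (μ s)⁻¹ * ∫⁻ y in s, ENNReal.ofReal |u y - c| ∂μ := by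
        rw [ofReal_setAverage hsub.abs (Filter.Eventually.of_forall fun _ => abs_nonneg _),
          ENNReal.div_eq_inv_mul]

theorem ofReal_abs_setAverage_sub_setAverage_le (hst : s ⊆ t) (hs₀ : μ s ≠ 0) (ht : μ t ≠ ∞)
    (hu : IntegrableOn u t μ) :
    ENNReal.ofReal |(⨍ z in s, u z ∂μ) - ⨍ z in t, u z ∂μ| ≤
      μ t / μ s * meanOscillation μ u t := by
  have ht₀ : μ t ≠ 0 := fun h => hs₀ (measure_mono_null hst h)
  calc ENNReal.ofReal |(⨍ z in s, u z ∂μ) - ⨍ z in t, u z ∂μ|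
      ≤ (μ s)⁻¹ * ∫⁻ y in s, ENNReal.ofReal |u y - ⨍ z in t, u z ∂μ| ∂μ :=
        ofReal_abs_setAverage_sub_le hs₀ (measure_ne_top_of_subset hst ht) (hu.mono_set hst) _
    _ ≤ (μ s)⁻¹ * ∫⁻ y in t, ENNReal.ofReal |u y - ⨍ z in t, u z ∂μ| ∂μ := by
        gcongr
    _ = μ t / μ s * meanOscillation μ u t := by
        rw [meanOscillation, ← mul_assoc, div_eq_mul_inv, mul_right_comm (μ t),
          ENNReal.mul_inv_cancel ht₀ ht, one_mul]

theorem setLIntegral_ofReal_abs_sub_le (ht₀ : μ t ≠ 0) (ht : μ t ≠ ∞) (c : ℝ) :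
    ∫⁻ y in t, ENNReal.ofReal |u y - c| ∂μ ≤
      μ t * (meanOscillation μ u t + ENNReal.ofReal |(⨍ z in t, u z ∂μ) - c|) := by
  calc ∫⁻ y in t, ENNReal.ofReal |u y - c| ∂μ
      ≤ ∫⁻ y in t, ENNReal.ofReal |u y - ⨍ z in t, u z ∂μ| +
          ENNReal.ofReal |(⨍ z in t, u z ∂μ) - c| ∂μ := by
        gcongr with y
        exact (ENNReal.ofReal_le_ofReal (abs_sub_le _ _ _)).trans ENNReal.ofReal_add_le
    _ = μ t * (meanOscillation μ u t + ENNReal.ofReal |(⨍ z in t, u z ∂μ) - c|) := by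
        rw [lintegral_add_right _ measurable_const, setLIntegral_const, meanOscillation, mul_add,
          ← mul_assoc, ENNReal.mul_inv_cancel ht₀ ht, one_mul, mul_comm]

structure IsDoublingChain (μ : Measure α) (B : ℕ → Set α) (K : ℝ≥0∞) : Prop where
  mono : Monotone B
  measure_ne_zero : ∀ i, μ (B i) ≠ 0
  measure_ne_top : ∀ i, μ (B i) ≠ ∞
  measure_succ_le : ∀ i, μ (B (i + 1)) ≤ K * μ (B i)

namespace IsDoublingChain

variable {B : ℕ → Set α} {K : ℝ≥0∞}

theorem one_le (hB : IsDoublingChain μ B K) : 1 ≤ K := by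
  have h : 1 * μ (B 0) ≤ K * μ (B 0) := by
    rw [one_mul]; exact (measure_mono (hB.mono (Nat.zero_le 1))).trans (hB.measure_succ_le 0)
  exact (ENNReal.mul_le_mul_iff_left (hB.measure_ne_zero 0) (hB.measure_ne_top 0)).mp h

theorem inv_measure_le_mul_inv_measure_succ (hB : IsDoublingChain μ B K) (i : ℕ) :
    (μ (B i))⁻¹ ≤ K * (μ (B (i + 1)))⁻¹ := by
  rw [← div_eq_mul_inv, ENNReal.le_div_iff_mul_le (Or.inl (hB.measure_ne_zero _))
    (Or.inl (hB.measure_ne_top _))]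
  calc (μ (B i))⁻¹ * μ (B (i + 1)) ≤ (μ (B i))⁻¹ * (K * μ (B i)) := by
        gcongr; exact hB.measure_succ_le i
    _ = K := by
        rw [mul_comm K, ← mul_assoc, ENNReal.inv_mul_cancel (hB.measure_ne_zero i)
          (hB.measure_ne_top i), one_mul]

theorem ofReal_abs_setAverage_sub_setAverage_zero_le (hB : IsDoublingChain μ B K)
    (hu : ∀ i, IntegrableOn u (B i) μ) (i : ℕ) :
    ENNReal.ofReal |(⨍ z in B i, u z ∂μ) - ⨍ z in B 0, u z ∂μ| ≤
      K * ∑ j ∈ Finset.range (i + 1), meanOscillation μ u (B j) := by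
  induction i with
  | zero => simp
  | succ i ih =>
    have hstep : ENNReal.ofReal |(⨍ z in B (i + 1), u z ∂μ) - ⨍ z in B i, u z ∂μ| ≤
        K * meanOscillation μ u (B (i + 1)) := by
      rw [abs_sub_comm]
      refine (ofReal_abs_setAverage_sub_setAverage_le (hB.mono i.le_succ) (hB.measure_ne_zero i)
        (hB.measure_ne_top _) (hu _)).trans ?_
      gcongr
      exact ENNReal.div_le_of_le_mul (hB.measure_succ_le i)
    calc ENNReal.ofReal |(⨍ z in B (i + 1), u z ∂μ) - ⨍ z in B 0, u z ∂μ|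
        ≤ ENNReal.ofReal |(⨍ z in B (i + 1), u z ∂μ) - ⨍ z in B i, u z ∂μ| +
            ENNReal.ofReal |(⨍ z in B i, u z ∂μ) - ⨍ z in B 0, u z ∂μ| :=
          (ENNReal.ofReal_le_ofReal (abs_sub_le _ _ _)).trans ENNReal.ofReal_add_le
      _ ≤ K * meanOscillation μ u (B (i + 1)) +
            K * ∑ j ∈ Finset.range (i + 1), meanOscillation μ u (B j) := add_le_add hstep ih
      _ = K * ∑ j ∈ Finset.range (i + 2), meanOscillation μ u (B j) := by
          rw [Finset.sum_range_succ _ (i + 1), mul_add, add_comm]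

theorem setLIntegral_ofReal_abs_sub_setAverage_zero_le (hB : IsDoublingChain μ B K)
    (hu : ∀ i, IntegrableOn u (B i) μ) (i : ℕ) :
    ∫⁻ y in B i, ENNReal.ofReal |u y - ⨍ z in B 0, u z ∂μ| ∂μ ≤
      μ (B i) * ((1 + K) * ∑ j ∈ Finset.range (i + 1), meanOscillation μ u (B j)) := by
  refine (setLIntegral_ofReal_abs_sub_le (hB.measure_ne_zero i) (hB.measure_ne_top i) _).trans ?_
  gcongr
  rw [add_mul, one_mul]
  gcongr
  · exact Finset.single_le_sum (f := fun j => meanOscillation μ u (B j)) (fun _ _ => zero_le)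
      (Finset.self_mem_range_succ i)
  · exact hB.ofReal_abs_setAverage_sub_setAverage_zero_le hu i

/-- On the annulus `B (i + 1) \ B i` the decay of `D` is measured against the inner ball;
one doubling step and a factor `θ⁻¹` move it to the outer ball. -/
theorem le_mul_pow_mul_inv_measure_of_mem_disjointed (hB : IsDoublingChain μ B K) {θ : ℝ≥0∞}
    (hθ₀ : θ ≠ 0) (hθ₁ : θ ≤ 1) {D : α → ℝ≥0∞} (hD₀ : ∀ y, D y ≤ (μ (B 0))⁻¹)
    (hD : ∀ i, ∀ y ∉ B i, D y ≤ θ ^ i * (μ (B i))⁻¹) (i : ℕ) (y : α) (hy : y ∈ disjointed B i) :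
    D y ≤ K * θ⁻¹ * θ ^ i * (μ (B i))⁻¹ := by
  cases i with
  | zero =>
    calc D y ≤ 1 * 1 * 1 * (μ (B 0))⁻¹ := by rw [one_mul, one_mul, one_mul]; exact hD₀ y
      _ ≤ K * θ⁻¹ * θ ^ 0 * (μ (B 0))⁻¹ := by
        gcongr
        · exact hB.one_le
        · exact ENNReal.one_le_inv.mpr hθ₁
        · rw [pow_zero]
  | succ i =>
    rw [hB.mono.disjointed_add_one] at hy
    calc D y ≤ θ ^ i * (μ (B i))⁻¹ := hD i y hy.2
      _ ≤ θ ^ i * (K * (μ (B (i + 1)))⁻¹) := by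
        gcongr; exact hB.inv_measure_le_mul_inv_measure_succ i
      _ = K * θ⁻¹ * θ ^ (i + 1) * (μ (B (i + 1)))⁻¹ := by
        rw [pow_succ', mul_assoc K, ← mul_assoc θ⁻¹, ENNReal.inv_mul_cancel hθ₀
          (ne_top_of_le_ne_top ENNReal.one_ne_top hθ₁), one_mul]
        ring

theorem lintegral_mul_ofReal_abs_sub_setAverage_zero_le (hB : IsDoublingChain μ B K)
    (hu : ∀ i, IntegrableOn u (B i) μ)
    (hB_meas : ∀ i, MeasurableSet (B i)) (hB_cover : ⋃ i, B i = Set.univ)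
    {θ : ℝ≥0∞} (hθ₀ : θ ≠ 0) (hθ₁ : θ ≤ 1) {D : α → ℝ≥0∞} (hD₀ : ∀ y, D y ≤ (μ (B 0))⁻¹)
    (hD : ∀ i, ∀ y ∉ B i, D y ≤ θ ^ i * (μ (B i))⁻¹) :
    ∫⁻ y, D y * ENNReal.ofReal |u y - ⨍ z in B 0, u z ∂μ| ∂μ ≤
      K * θ⁻¹ * (1 + K) * (1 - θ)⁻¹ * ∑' i, θ ^ i * meanOscillation μ u (B i) := by
  set f : α → ℝ≥0∞ := fun y => ENNReal.ofReal |u y - ⨍ z in B 0, u z ∂μ|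
  set S : ℕ → ℝ≥0∞ := fun i => ∑ j ∈ Finset.range (i + 1), meanOscillation μ u (B j)
  have hannulus (i : ℕ) : ∫⁻ y in disjointed B i, D y * f y ∂μ ≤
      K * θ⁻¹ * (1 + K) * (θ ^ i * S i) := by
    have hf : AEMeasurable f (μ.restrict (B i)) :=
      ((hu i).aemeasurable.sub_const _).abs.ennreal_ofReal
    calc ∫⁻ y in disjointed B i, D y * f y ∂μ
        ≤ ∫⁻ y in disjointed B i, K * θ⁻¹ * θ ^ i * (μ (B i))⁻¹ * f y ∂μ :=
          setLIntegral_mono' (MeasurableSet.disjointed hB_meas i) fun y hy => by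
            gcongr
            exact hB.le_mul_pow_mul_inv_measure_of_mem_disjointed hθ₀ hθ₁ hD₀ hD i y hy
      _ ≤ ∫⁻ y in B i, K * θ⁻¹ * θ ^ i * (μ (B i))⁻¹ * f y ∂μ :=
          lintegral_mono_set (disjointed_subset B i)
      _ ≤ K * θ⁻¹ * θ ^ i * (μ (B i))⁻¹ * (μ (B i) * ((1 + K) * S i)) := by
          rw [lintegral_const_mul'' _ hf]
          gcongr
          exact hB.setLIntegral_ofReal_abs_sub_setAverage_zero_le hu i
      _ = K * θ⁻¹ * (1 + K) * (θ ^ i * S i) := by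
          rw [mul_assoc _ (μ (B i))⁻¹, ← mul_assoc (μ (B i))⁻¹,
            ENNReal.inv_mul_cancel (hB.measure_ne_zero i) (hB.measure_ne_top i), one_mul]
          ring
  calc ∫⁻ y, D y * f y ∂μ = ∑' i, ∫⁻ y in disjointed B i, D y * f y ∂μ := by
        rw [← lintegral_iUnion (MeasurableSet.disjointed hB_meas) (disjoint_disjointed B),
          iUnion_disjointed, hB_cover, setLIntegral_univ]
    _ ≤ ∑' i, K * θ⁻¹ * (1 + K) * (θ ^ i * S i) := ENNReal.tsum_le_tsum hannulus
    _ = K * θ⁻¹ * (1 + K) * (1 - θ)⁻¹ * ∑' i, θ ^ i * meanOscillation μ u (B i) := by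
        rw [ENNReal.tsum_mul_left, ENNReal.tsum_pow_mul_sum_range, mul_assoc _ (1 - θ)⁻¹]

end IsDoublingChain

end MeasureTheory

namespace SHT

open Filter

variable {X : Type*}

section

variable {d : X → X → ℝ}

theorem ball_subset_ball (x : X) {r r' : ℝ} (h : r ≤ r') : ball d x r ⊆ ball d x r' :=
  fun _ hy => lt_of_lt_of_le hy h

theorem iUnion_ball_eq_univ (x : X) {r : ℕ → ℝ} (hr : Tendsto r atTop atTop) :
    ⋃ i, ball d x (r i) = Set.univ :=
  Set.eq_univ_of_forall fun y => Set.mem_iUnion.mpr (hr.eventually_gt_atTop (d x y)).exists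

variable [MeasurableSpace X] {μ : Measure X} {A₀ Cμ : ℝ}

theorem IsSHT.measure_ball_two_pow_mul_le (h : IsSHT d μ A₀ Cμ) (x : X) (n : ℕ) {r : ℝ}
    (hr : 0 < r) : μ (ball d x (2 ^ n * r)) ≤ ENNReal.ofReal Cμ ^ n * μ (ball d x r) := by
  induction n with
  | zero => simp
  | succ n ih =>
    calc μ (ball d x (2 ^ (n + 1) * r)) = μ (ball d x (2 * (2 ^ n * r))) := by
          rw [pow_succ', mul_assoc]
      _ ≤ ENNReal.ofReal Cμ * μ (ball d x (2 ^ n * r)) := h.doubling x _ (by positivity)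
      _ ≤ ENNReal.ofReal Cμ ^ (n + 1) * μ (ball d x r) := by
          rw [pow_succ', mul_assoc]; gcongr

theorem Dgamma_le_inv_measure_ball {x y : X} (hxy : 0 ≤ d x y) {γ r : ℝ} (hγ : 0 ≤ γ)
    (hr : 0 ≤ r) : Dgamma d μ γ x y r ≤ (μ (ball d x r))⁻¹ := by
  calc Dgamma d μ γ x y r ≤ (μ (ball d x r))⁻¹ * 1 := by
        unfold Dgamma
        gcongr
        · exact le_self_add
        · exact ENNReal.ofReal_le_one.mpr (Real.rpow_le_one (by positivity)
            (div_le_one_of_le₀ (le_add_of_nonneg_right hxy) (by positivity)) hγ)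
    _ = (μ (ball d x r))⁻¹ := mul_one _

theorem Dgamma_le_of_le_dist {x y : X} {γ r ρ : ℝ} (hγ : 0 ≤ γ) (hr : 0 ≤ r) (hρ : 0 < ρ)
    (hρd : ρ ≤ d x y) :
    Dgamma d μ γ x y r ≤ (μ (ball d x ρ))⁻¹ * ENNReal.ofReal ((r / ρ) ^ γ) := by
  have hρr : ρ ≤ r + d x y := hρd.trans (le_add_of_nonneg_left hr)
  unfold Dgamma
  gcongr
  · exact (measure_mono (ball_subset_ball x hρd)).trans le_add_self
  · exact div_nonneg hr (hρ.le.trans hρr)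

theorem tendsto_zpow_sub_natCast_atTop {δ : ℝ} (hδ₀ : 0 < δ) (hδ₁ : δ < 1) (k : ℤ) :
    Tendsto (fun i : ℕ => δ ^ (k - i)) atTop atTop := by
  have h : (fun i : ℕ => δ ^ (k - i)) = fun i : ℕ => δ ^ k * δ⁻¹ ^ i := by
    ext i
    rw [zpow_sub₀ hδ₀.ne', zpow_natCast, div_eq_mul_inv, inv_pow]
  rw [h]
  exact (tendsto_pow_atTop_atTop_of_one_lt (one_lt_inv₀ hδ₀ |>.mpr hδ₁)).const_mul_atTop
    (zpow_pos hδ₀ k)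

theorem IsSHT.isDoublingChain_ball_zpow (h : IsSHT d μ A₀ Cμ) {δ : ℝ} (hδ₀ : 0 < δ)
    (hδ₁ : δ < 1) {N : ℕ} (hN : δ⁻¹ ≤ 2 ^ N) (x : X) (k : ℤ) :
    IsDoublingChain μ (fun i : ℕ => ball d x (δ ^ (k - i))) (ENNReal.ofReal Cμ ^ N) where
  mono i j hij := ball_subset_ball x
    (zpow_le_zpow_right_of_le_one₀ hδ₀ hδ₁.le (by omega))
  measure_ne_zero i := (h.ball_pos x _ (zpow_pos hδ₀ _)).ne'
  measure_ne_top i := (h.ball_lt_top x _ (zpow_pos hδ₀ _)).ne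
  measure_succ_le i := by
    have hr : δ ^ (k - ↑(i + 1)) ≤ 2 ^ N * δ ^ (k - i) := by
      rw [Nat.cast_succ, sub_add_eq_sub_sub, zpow_sub₀ hδ₀.ne', zpow_one, div_eq_inv_mul]
      gcongr
    exact (measure_mono (ball_subset_ball x hr)).trans
      (h.measure_ball_two_pow_mul_le x N (zpow_pos hδ₀ _))

theorem IsSHT.lintegral_Dgamma_mul_le (h : IsSHT d μ A₀ Cμ) {δ : ℝ} (hδ₀ : 0 < δ)
    (hδ₁ : δ < 1) {N : ℕ} (hN : δ⁻¹ ≤ 2 ^ N) {γ : ℝ} (hγ : 0 ≤ γ) {u : X → ℝ}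
    (hu : ∀ (z : X) (r : ℝ), 0 < r → IntegrableOn u (ball d z r) μ) (k : ℤ) (x : X) :
    ∫⁻ y, Dgamma d μ γ x y (δ ^ k) * ENNReal.ofReal |u y - ⨍ z in ball d x (δ ^ k), u z ∂μ| ∂μ ≤
      ENNReal.ofReal Cμ ^ N * (ENNReal.ofReal (δ ^ γ))⁻¹ * (1 + ENNReal.ofReal Cμ ^ N) *
        (1 - ENNReal.ofReal (δ ^ γ))⁻¹ *
        ∑' i : ℕ, ENNReal.ofReal (δ ^ γ) ^ i * meanOscillation μ u (ball d x (δ ^ (k - i))) := by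
  have hk : 0 ≤ δ ^ k := (zpow_pos hδ₀ k).le
  have hD (i : ℕ) (y : X) (hy : y ∉ ball d x (δ ^ (k - i))) :
      Dgamma d μ γ x y (δ ^ k) ≤
        ENNReal.ofReal (δ ^ γ) ^ i * (μ (ball d x (δ ^ (k - i))))⁻¹ := by
    have hratio : δ ^ k / δ ^ (k - i) = δ ^ i := by
      rw [← zpow_sub₀ hδ₀.ne', show k - (k - i) = (i : ℤ) by ring, zpow_natCast]
    refine (Dgamma_le_of_le_dist hγ hk (zpow_pos hδ₀ _) (not_lt.mp hy)).trans_eq ?_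
    rw [hratio, ← Real.rpow_pow_comm hδ₀.le, ENNReal.ofReal_pow (Real.rpow_nonneg hδ₀.le γ),
      mul_comm]
  simpa using
    (h.isDoublingChain_ball_zpow hδ₀ hδ₁ hN x k).lintegral_mul_ofReal_abs_sub_setAverage_zero_le
    (fun i => hu x _ (zpow_pos hδ₀ _)) (fun i => h.measurable_ball x _)
    (iUnion_ball_eq_univ x (tendsto_zpow_sub_natCast_atTop hδ₀ hδ₁ k))
    (ENNReal.ofReal_pos.mpr (Real.rpow_pos_of_pos hδ₀ γ)).ne'
    (ENNReal.ofReal_le_one.mpr (Real.rpow_le_one hδ₀.le hδ₁.le hγ))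
    (fun y => by simpa using Dgamma_le_inv_measure_ball (h.nonneg x y) hγ hk) hD

end

theorem Dgamma_oscillation_bound_general
    [MeasurableSpace X] (d : X → X → ℝ) (μ : Measure X) (A₀ Cμ δ : ℝ)
    (hSHT : IsSHT d μ A₀ Cμ)
    (hδ0 : 0 < δ) (hδ1 : δ < 1)
    (γ : ℝ) (hγ : 0 < γ) :
    ∃ C : ℝ, 0 < C ∧
      ∀ u : X → ℝ, Measurable u →
        (∀ (z : X) (r : ℝ), 0 < r → IntegrableOn u (ball d z r) μ) →
        ∀ (k : ℤ) (x : X),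
        (∫⁻ y, Dgamma d μ γ x y (δ ^ k) *
            ENNReal.ofReal |u y - ⨍ z in ball d x (δ ^ k), u z ∂μ| ∂μ) ≤
          ENNReal.ofReal C *
            ∑' i : ℕ, ENNReal.ofReal (δ ^ ((i : ℝ) * γ)) *
              ((μ (ball d x (δ ^ (k - i))))⁻¹ *
                ∫⁻ y in ball d x (δ ^ (k - i)),
                  ENNReal.ofReal |u y - ⨍ z in ball d x (δ ^ (k - i)), u z ∂μ| ∂μ) := by
  obtain ⟨N, hN⟩ := pow_unbounded_of_one_lt δ⁻¹ (one_lt_two : (1 : ℝ) < 2)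
  set K := ENNReal.ofReal Cμ ^ N
  set θ := ENNReal.ofReal (δ ^ γ)
  have hK : K ≠ 0 := pow_ne_zero _ (ENNReal.ofReal_pos.mpr (zero_lt_one.trans_le hSHT.one_le_C)).ne'
  have hθ₀ : θ ≠ 0 := (ENNReal.ofReal_pos.mpr (Real.rpow_pos_of_pos hδ0 γ)).ne'
  have hθ₁ : θ < 1 := ENNReal.ofReal_lt_one.mpr (Real.rpow_lt_one hδ0.le hδ1 hγ)
  set M := K * θ⁻¹ * (1 + K) * (1 - θ)⁻¹
  have hM₀ : M ≠ 0 := by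
    simp [M, hK, hθ₁.ne_top, θ]
  have hM : M ≠ ∞ := by
    refine ENNReal.mul_ne_top (ENNReal.mul_ne_top (ENNReal.mul_ne_top ?_ ?_) ?_) ?_ <;>
      simp [K, hθ₀, (tsub_pos_of_lt hθ₁).ne']
  refine ⟨M.toReal, ENNReal.toReal_pos hM₀ hM, fun u _ hu k x => ?_⟩
  rw [ENNReal.ofReal_toReal hM]
  convert hSHT.lintegral_Dgamma_mul_le hδ0 hδ1 hN.le hγ.le hu k x using 4 with i
  rw [mul_comm (i : ℝ), Real.rpow_mul_natCast hδ0.le,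
    ENNReal.ofReal_pow (Real.rpow_nonneg hδ0.le γ), meanOscillation]

/-- For `γ > 0` there is `C > 0` such that, for every locally
integrable `u`, every `k ∈ ℤ`, and every `x ∈ X`,
`∫_X D_γ(x,y;δ^k) |u(y) - u_{B(x,δ^k)}| dμ(y)
  ≤ C Σ_{i=0}^∞ δ^{iγ} ⨍_{B(x,δ^{k-i})} |u - u_{B(x,δ^{k-i})}| dμ`. -/
theorem Dgamma_oscillation_bound
    [MeasurableSpace X] (d : X → X → ℝ) (μ : Measure X) (A₀ Cμ δ : ℝ)
    (hSHT : IsSHT d μ A₀ Cμ)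
    (hδ0 : 0 < δ) (hδ1 : δ < 1) (hδA : δ ≤ (2 * A₀) ^ (-10 : ℤ))
    (γ : ℝ) (hγ : 0 < γ) :
    ∃ C : ℝ, 0 < C ∧
      ∀ u : X → ℝ, Measurable u →
        (∀ (z : X) (r : ℝ), 0 < r → IntegrableOn u (ball d z r) μ) →
        ∀ (k : ℤ) (x : X),
        (∫⁻ y, Dgamma d μ γ x y (δ ^ k) *
            ENNReal.ofReal |u y - ⨍ z in ball d x (δ ^ k), u z ∂μ| ∂μ) ≤
          ENNReal.ofReal C *
            ∑' i : ℕ, ENNReal.ofReal (δ ^ ((i : ℝ) * γ)) *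
              ((μ (ball d x (δ ^ (k - i))))⁻¹ *
                ∫⁻ y in ball d x (δ ^ (k - i)),
                  ENNReal.ofReal |u y - ⨍ z in ball d x (δ ^ (k - i)), u z ∂μ| ∂μ) :=
  Dgamma_oscillation_bound_general d μ A₀ Cμ δ hSHT hδ0 hδ1 γ hγ

end SHT
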